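/- Let (Y, d_Y) be a compact geodesic metric space with at least two points, M > 0, d_ℓ the induced length metric on X_M = Y × (0, M], and ω ∈ X_M a basepoint. Then there exists a constant C > 0 such that for all distinct a, b ∈ Y and all sequences x_i = (p_i, s_i), y_i = (q_i, t_i) in X_M with s_i → 0, t_i → 0, p_i → a and q_i → b, one has |liminf_{i→∞} (x_i, y_i)_ω + log d_Y(a,b)| ≤ C. -/

import Mathlib

open Set

/-- The Balogh–Schramm distance on `Y × (0, ∞)`:
`ρ((p,s),(q,t)) = 2·log((d_Y(p,q) + max(s,t))/√(s·t))`. -/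
noncomputable def BS {Y : Type*} [MetricSpace Y] (x y : Y × ℝ) : ℝ :=
  2 * Real.log ((dist x.1 y.1 + max x.2 y.2) / Real.sqrt (x.2 * y.2))

/-- Length of the map `γ` over the set `S` with respect to the distance
function `d`: the supremum over finite monotone partitions in `S` of the sums
of consecutive distances (as in Mathlib's `eVariationOn`). -/
noncomputable def lengthOn {X : Type*} (d : X → X → ℝ) (γ : ℝ → X) (S : Set ℝ) : ENNReal :=
  ⨆ p : ℕ × { u : ℕ → ℝ // Monotone u ∧ ∀ i, u i ∈ S },
    ∑ i ∈ Finset.range p.1, ENNReal.ofReal (d (γ (p.2.1 i)) (γ (p.2.1 (i + 1))))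

/-- Membership in `X_M = Y × (0, M]`. -/
def inXM {Y : Type*} (M : ℝ) (x : Y × ℝ) : Prop := 0 < x.2 ∧ x.2 ≤ M

/-- The induced length metric on `X_M = Y × (0, M]`: the infimum of
Balogh–Schramm lengths of continuous paths joining `x` and `y` inside `X_M`. -/
noncomputable def dLen {Y : Type*} [MetricSpace Y] (M : ℝ) (x y : Y × ℝ) : ℝ :=
  (sInf {L : ENNReal | ∃ (a b : ℝ) (γ : ℝ → Y × ℝ), a ≤ b ∧
      ContinuousOn γ (Icc a b) ∧ γ a = x ∧ γ b = y ∧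
      (∀ t ∈ Icc a b, inXM M (γ t)) ∧
      lengthOn (BS (Y := Y)) γ (Icc a b) = L}).toReal

/-- A metric space is geodesic: any two points are joined by an isometric
embedding of `[0, dist p q]`. -/
def GeodesicSpace (Y : Type*) [MetricSpace Y] : Prop :=
  ∀ p q : Y, ∃ α : ℝ → Y, α 0 = p ∧ α (dist p q) = q ∧
    ∀ s ∈ Icc (0:ℝ) (dist p q), ∀ t ∈ Icc (0:ℝ) (dist p q), dist (α s) (α t) = |s - t|

/-- The Gromov product `(x,y)_ω` with respect to the length metric `dLen M`. -/
noncomputable def gromovProd {Y : Type*} [MetricSpace Y] (M : ℝ) (ω x y : Y × ℝ) : ℝ :=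
  (dLen M x ω + dLen M y ω - dLen M x y) / 2

/-!
The length metric `dLen` differs from `ρ = BS` by a bounded additive error. From below, the
length of a path dominates the distance of its endpoints. From above, the path from `(p, s)` to
`(q, t)` that climbs in log-scale to height `h = min M (d(p,q) + max s t)`, follows a geodesic of
`Y` at that height and descends again has length at most `ρ + 2 + 2 d(p,q) / M`. Hence the Gromov
products of `dLen` and of `ρ` differ by at most `2 + 2 diam Y / M`, and the latter is explicit:
along the sequences it tends to `log (d(a,ω₁) + ω₂) + log (d(b,ω₁) + ω₂) - log ω₂ - log d(a,b)`,
whose first three terms are bounded in terms of `diam Y` and `ω₂` only.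
-/

open Real Filter Topology

section BaloghSchramm

variable {Y : Type*} [MetricSpace Y]

lemma BS_eq {x y : Y × ℝ} (hx : 0 < x.2) (hy : 0 < y.2) :
    BS x y = 2 * log (dist x.1 y.1 + max x.2 y.2) - log x.2 - log y.2 := by
  have hnum : 0 < dist x.1 y.1 + max x.2 y.2 := by
    positivity [lt_max_of_lt_left (c := y.2) hx]
  have hxy : 0 < x.2 * y.2 := mul_pos hx hy
  rw [BS, log_div hnum.ne' (sqrt_ne_zero'.2 hxy), log_sqrt hxy.le, log_mul hx.ne' hy.ne']
  ring

lemma BS_nonneg {x y : Y × ℝ} (hx : 0 < x.2) (hy : 0 < y.2) : 0 ≤ BS x y := by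
  have hmax : 0 < max x.2 y.2 := lt_max_of_lt_left hx
  have hlog : log (max x.2 y.2) ≤ log (dist x.1 y.1 + max x.2 y.2) :=
    log_le_log hmax (le_add_of_nonneg_left dist_nonneg)
  rw [BS_eq hx hy]
  linarith [log_le_log hx (le_max_left x.2 y.2), log_le_log hy (le_max_right x.2 y.2)]

lemma BS_mk_mk_self (y : Y) {σ τ : ℝ} (hσ : 0 < σ) (hτ : 0 < τ) :
    BS (y, σ) (y, τ) = |log σ - log τ| := by
  rw [BS_eq hσ hτ, dist_self, zero_add]
  rcases le_total σ τ with h | h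
  · rw [max_eq_right h, abs_of_nonpos (by linarith [log_le_log hσ h])]
    ring
  · rw [max_eq_left h, abs_of_nonneg (by linarith [log_le_log hτ h])]
    ring

lemma BS_mk_mk_le {h σ τ : ℝ} (y y' : Y) (hσ : 0 < σ) (hτ : 0 < τ) (hσh : σ ≤ h)
    (hτh : τ ≤ h) :
    BS (y, σ) (y', τ) ≤ (log h - log σ) + (log h - log τ) + 2 * (dist y y' / h) := by
  have hh : 0 < h := hσ.trans_le hσh
  have hlog : log (dist y y' + max σ τ) ≤ log h + dist y y' / h :=
    calc log (dist y y' + max σ τ) ≤ log (h * (1 + dist y y' / h)) := by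
          refine log_le_log (by positivity [lt_max_of_lt_left (c := τ) hσ]) ?_
          rw [mul_add, mul_div_cancel₀ _ hh.ne', mul_one]
          linarith [max_le hσh hτh]
      _ ≤ log h + dist y y' / h := by
          rw [log_mul hh.ne' (by positivity)]
          linarith [log_le_sub_one_of_pos (by positivity : 0 < 1 + dist y y' / h)]
  rw [BS_eq hσ hτ]
  linarith

end BaloghSchramm

section PathLength

variable {X : Type*} (d : X → X → ℝ) (γ : ℝ → X)

lemma ofReal_le_lengthOn {a b : ℝ} (hab : a ≤ b) :
    ENNReal.ofReal (d (γ a) (γ b)) ≤ lengthOn d γ (Icc a b) := by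
  let u : ℕ → ℝ := fun i => if i = 0 then a else b
  have hu : Monotone u := by
    intro i j hij
    simp only [u]
    split_ifs <;> first | exact le_rfl | exact hab | omega
  have hmem : ∀ i, u i ∈ Icc a b := fun i => by
    by_cases hi : i = 0 <;> simp [u, hi, hab]
  have := le_iSup (fun p : ℕ × { u : ℕ → ℝ // Monotone u ∧ ∀ i, u i ∈ Icc a b } =>
      ∑ i ∈ Finset.range p.1, ENNReal.ofReal (d (γ (p.2.1 i)) (γ (p.2.1 (i + 1)))))
    (1, ⟨u, hu, hmem⟩)
  simpa [lengthOn, u] using this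

lemma lengthOn_le_of_le_sub {a b : ℝ} {f : ℝ → ℝ} (hf : MonotoneOn f (Icc a b))
    (hd : ∀ u ∈ Icc a b, ∀ v ∈ Icc a b, u ≤ v → d (γ u) (γ v) ≤ f v - f u) :
    lengthOn d γ (Icc a b) ≤ ENNReal.ofReal (f b - f a) := by
  refine iSup_le ?_
  rintro ⟨n, u, hu, hmem⟩
  have hab : a ≤ b := (hmem 0).1.trans (hmem 0).2
  calc ∑ i ∈ Finset.range n, ENNReal.ofReal (d (γ (u i)) (γ (u (i + 1))))
      ≤ ∑ i ∈ Finset.range n, ENNReal.ofReal (f (u (i + 1)) - f (u i)) :=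
        Finset.sum_le_sum fun i _ =>
          ENNReal.ofReal_le_ofReal (hd _ (hmem i) _ (hmem (i + 1)) (hu i.le_succ))
    _ = ENNReal.ofReal (f (u n) - f (u 0)) := by
        rw [← ENNReal.ofReal_sum_of_nonneg fun i _ =>
          sub_nonneg.2 (hf (hmem i) (hmem (i + 1)) (hu i.le_succ)),
          Finset.sum_range_sub (fun i => f (u i))]
    _ ≤ ENNReal.ofReal (f b - f a) :=
        ENNReal.ofReal_le_ofReal (sub_le_sub (hf (hmem n) ⟨hab, le_rfl⟩ (hmem n).2)
          (hf ⟨le_rfl, hab⟩ (hmem 0) (hmem 0).1))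

end PathLength

section BoxPath

noncomputable def boxDepth (A d u : ℝ) : ℝ := max (A - u) 0 + max (u - (A + d)) 0

lemma boxDepth_of_le {A d u : ℝ} (hd : 0 ≤ d) (hu : u ≤ A) : boxDepth A d u = A - u := by
  rw [boxDepth, max_eq_left (by linarith), max_eq_right (by linarith), add_zero]

lemma boxDepth_of_ge {A d u : ℝ} (hd : 0 ≤ d) (hu : A + d ≤ u) :
    boxDepth A d u = u - (A + d) := by
  rw [boxDepth, max_eq_right (by linarith), max_eq_left (by linarith), zero_add]

variable {Y : Type*} (α : ℝ → Y) {d : ℝ} (hd : 0 ≤ d) (h A : ℝ)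

/-- Climb in log-scale for time `A` up to height `h`, follow `α` at height `h` for time `d`,
then descend in log-scale. -/
noncomputable def boxPath (u : ℝ) : Y × ℝ :=
  (α (projIcc 0 d hd (u - A)), h * exp (-boxDepth A d u))

/-- Each unit of horizontal distance at height `h` costs `2 / h`. -/
noncomputable def boxArclength (u : ℝ) : ℝ :=
  min u A + 2 / h * projIcc 0 d hd (u - A) + max (u - (A + d)) 0

variable {α h A}

lemma boxArclength_of_le {u : ℝ} (hu : u ≤ A) : boxArclength hd h A u = u := by
  rw [boxArclength, projIcc_of_le_left hd (by linarith), min_eq_left hu,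
    max_eq_right (by linarith)]
  simp

lemma boxArclength_of_ge {u : ℝ} (hu : A + d ≤ u) :
    boxArclength hd h A u = A + 2 * (d / h) + (u - (A + d)) := by
  rw [boxArclength, projIcc_of_right_le hd (by linarith), min_eq_right (by linarith),
    max_eq_left (by linarith)]
  ring

lemma monotone_boxArclength (hh : 0 < h) : Monotone (boxArclength hd h A) := by
  intro u v huv
  have hproj : (projIcc 0 d hd (u - A) : ℝ) ≤ projIcc 0 d hd (v - A) :=
    monotone_projIcc hd (by linarith)
  unfold boxArclength
  gcongr

lemma boxPath_of_le {u : ℝ} (hu : u ≤ A) : boxPath α hd h A u = (α 0, h * exp (-(A - u))) := by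
  rw [boxPath, boxDepth_of_le hd hu, projIcc_of_le_left hd (by linarith)]

lemma boxPath_of_ge {u : ℝ} (hu : A + d ≤ u) :
    boxPath α hd h A u = (α d, h * exp (-(u - (A + d)))) := by
  rw [boxPath, boxDepth_of_ge hd hu, projIcc_of_right_le hd (by linarith)]

lemma continuous_boxPath [PseudoEMetricSpace Y] (hα : LipschitzOnWith 1 α (Icc 0 d)) :
    Continuous (boxPath α hd h A) := by
  refine Continuous.prodMk ?_ (by unfold boxDepth; fun_prop)
  exact hα.continuousOn.comp_continuous (by fun_prop) fun u => (projIcc 0 d hd (u - A)).2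

lemma boxPath_snd_pos (hh : 0 < h) (u : ℝ) : 0 < (boxPath α hd h A u).2 := by
  unfold boxPath; positivity

lemma boxPath_snd_le (hh : 0 < h) (u : ℝ) : (boxPath α hd h A u).2 ≤ h := by
  refine mul_le_of_le_one_right hh.le (exp_le_one_iff.2 (neg_nonpos.2 ?_))
  unfold boxDepth; positivity

lemma log_boxPath_snd (hh : 0 < h) (u : ℝ) :
    log (boxPath α hd h A u).2 = log h - boxDepth A d u := by
  rw [boxPath, log_mul hh.ne' (exp_ne_zero _), log_exp, sub_eq_add_neg]

lemma BS_boxPath_of_projIcc_eq [MetricSpace Y] (hh : 0 < h) {u v : ℝ}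
    (huv : projIcc 0 d hd (u - A) = projIcc 0 d hd (v - A)) :
    BS (boxPath α hd h A u) (boxPath α hd h A v) = |boxDepth A d u - boxDepth A d v| := by
  have key := BS_mk_mk_self (α (projIcc 0 d hd (u - A)))
    (boxPath_snd_pos hd hh u (α := α) (A := A)) (boxPath_snd_pos hd hh v (α := α) (A := A))
  rw [log_boxPath_snd hd hh, log_boxPath_snd hd hh, sub_sub_sub_cancel_left, abs_sub_comm] at key
  rw [← key, boxPath, boxPath, huv]

lemma BS_boxPath_le [MetricSpace Y] (hα : LipschitzOnWith 1 α (Icc 0 d)) (hh : 0 < h)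
    {u v : ℝ} (huv : u ≤ v) :
    BS (boxPath α hd h A u) (boxPath α hd h A v) ≤
      boxArclength hd h A v - boxArclength hd h A u := by
  rcases le_or_gt v A with hvA | hAv
  · have hu := huv.trans hvA
    rw [BS_boxPath_of_projIcc_eq hd hh (by rw [projIcc_of_le_left hd (by linarith),
      projIcc_of_le_left hd (by linarith)]), boxDepth_of_le hd hu, boxDepth_of_le hd hvA,
      boxArclength_of_le hd hu, boxArclength_of_le hd hvA, abs_of_nonneg (by linarith)]
    linarith
  rcases le_or_gt (A + d) u with hAu | huA
  · have hv := hAu.trans huv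
    rw [BS_boxPath_of_projIcc_eq hd hh (by rw [projIcc_of_right_le hd (by linarith),
      projIcc_of_right_le hd (by linarith)]), boxDepth_of_ge hd hAu, boxDepth_of_ge hd hv,
      boxArclength_of_ge hd hAu, boxArclength_of_ge hd hv, abs_of_nonpos (by linarith)]
    linarith
  have hBS : BS (boxPath α hd h A u) (boxPath α hd h A v) ≤ boxDepth A d u + boxDepth A d v +
      2 * (dist (α (projIcc 0 d hd (u - A))) (α (projIcc 0 d hd (v - A))) / h) := by
    have := BS_mk_mk_le (α (projIcc 0 d hd (u - A))) (α (projIcc 0 d hd (v - A)))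
      (boxPath_snd_pos hd hh u (α := α) (A := A)) (boxPath_snd_pos hd hh v (α := α) (A := A))
      (boxPath_snd_le hd hh u) (boxPath_snd_le hd hh v)
    rwa [log_boxPath_snd hd hh, log_boxPath_snd hd hh, sub_sub_cancel, sub_sub_cancel] at this
  have hproj : (projIcc 0 d hd (u - A) : ℝ) ≤ projIcc 0 d hd (v - A) :=
    monotone_projIcc hd (by linarith)
  have hdist : dist (α (projIcc 0 d hd (u - A))) (α (projIcc 0 d hd (v - A))) ≤
      (projIcc 0 d hd (v - A) : ℝ) - projIcc 0 d hd (u - A) := by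
    have := hα.dist_le_mul _ (projIcc 0 d hd (u - A)).2 _ (projIcc 0 d hd (v - A)).2
    rwa [NNReal.coe_one, one_mul, Real.dist_eq, abs_sub_comm,
      abs_of_nonneg (sub_nonneg.2 hproj)] at this
  have hdepth_u : boxDepth A d u = A - min u A := by
    rw [boxDepth, max_eq_right (a := u - (A + d)) (by linarith), add_zero]
    rcases le_total u A with huA' | huA' <;> simp [huA']
  have hdepth_v : boxDepth A d v = max (v - (A + d)) 0 := by
    rw [boxDepth, max_eq_right (a := A - v) (by linarith), zero_add]
  rw [boxArclength, boxArclength, min_eq_right hAv.le,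
    max_eq_right (a := u - (A + d)) (by linarith)]
  have hcost : 2 * (dist (α (projIcc 0 d hd (u - A))) (α (projIcc 0 d hd (v - A))) / h) ≤
      2 / h * ((projIcc 0 d hd (v - A) : ℝ) - projIcc 0 d hd (u - A)) := by
    rw [mul_div_assoc', div_mul_eq_mul_div]
    gcongr
  linarith

end BoxPath

section LengthMetric

variable {Y : Type*} [MetricSpace Y] {M : ℝ}

def pathLengths (M : ℝ) (x y : Y × ℝ) : Set ENNReal :=
  {L : ENNReal | ∃ (a b : ℝ) (γ : ℝ → Y × ℝ), a ≤ b ∧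
      ContinuousOn γ (Icc a b) ∧ γ a = x ∧ γ b = y ∧
      (∀ t ∈ Icc a b, inXM M (γ t)) ∧
      lengthOn (BS (Y := Y)) γ (Icc a b) = L}

lemma dLen_eq_toReal_sInf (x y : Y × ℝ) : dLen M x y = (sInf (pathLengths M x y)).toReal := rfl

lemma ofReal_BS_le_of_mem_pathLengths {x y : Y × ℝ} {L : ENNReal}
    (hL : L ∈ pathLengths M x y) : ENNReal.ofReal (BS x y) ≤ L := by
  obtain ⟨a, b, γ, hab, -, rfl, rfl, -, rfl⟩ := hL
  exact ofReal_le_lengthOn BS γ hab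

lemma GeodesicSpace.exists_lipschitzOnWith (hgeo : GeodesicSpace Y) (p q : Y) :
    ∃ α : ℝ → Y, α 0 = p ∧ α (dist p q) = q ∧ LipschitzOnWith 1 α (Icc 0 (dist p q)) := by
  obtain ⟨α, hα0, hαd, hα⟩ := hgeo p q
  refine ⟨α, hα0, hαd, LipschitzOnWith.of_dist_le_mul fun u hu v hv => ?_⟩
  rw [hα u hu v hv, NNReal.coe_one, one_mul, Real.dist_eq]

lemma div_min_add_le {d m M : ℝ} (hd : 0 ≤ d) (hm : 0 < m) (hM : 0 < M) :
    d / min M (d + m) ≤ 1 + d / M := by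
  rcases min_cases M (d + m) with ⟨he, -⟩ | ⟨he, -⟩ <;> rw [he]
  · linarith
  · have : d / (d + m) ≤ 1 := (div_le_one (by positivity)).2 (by linarith)
    linarith [div_nonneg hd hM.le]

/-- The comparison path: a `boxPath` over a geodesic, at height `min M (d + max s t)`. -/
lemma exists_mem_pathLengths_le (hgeo : GeodesicSpace Y) (hM : 0 < M) {x y : Y × ℝ}
    (hx : inXM M x) (hy : inXM M y) :
    ∃ L ∈ pathLengths M x y, L ≤ ENNReal.ofReal (BS x y + 2 + 2 * (dist x.1 y.1 / M)) := by
  obtain ⟨p, s⟩ := x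
  obtain ⟨q, t⟩ := y
  obtain ⟨hs, hsM⟩ := hx
  obtain ⟨ht, htM⟩ := hy
  dsimp only at hs hsM ht htM ⊢
  obtain ⟨α, hα0, hαd, hα⟩ := hgeo.exists_lipschitzOnWith p q
  set d := dist p q
  have hd : 0 ≤ d := dist_nonneg
  have hmax : 0 < max s t := lt_max_of_lt_left hs
  set h := min M (d + max s t)
  have hh : 0 < h := lt_min hM (by positivity)
  have hsh : s ≤ h := le_min hsM (by linarith [le_max_left s t])
  have hth : t ≤ h := le_min htM (by linarith [le_max_right s t])
  set A := log h - log s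
  set B := log h - log t
  have hA : 0 ≤ A := sub_nonneg.2 (log_le_log hs hsh)
  have hB : 0 ≤ B := sub_nonneg.2 (log_le_log ht hth)
  have hexp : ∀ r, 0 < r → h * exp (-(log h - log r)) = r := fun r hr => by
    rw [neg_sub, exp_sub, exp_log hr, exp_log hh]
    field_simp
  refine ⟨lengthOn BS (boxPath α hd h A) (Icc 0 (A + d + B)),
    ⟨0, A + d + B, _, by positivity, (continuous_boxPath hd hα).continuousOn, ?_, ?_,
      fun u _ => ⟨boxPath_snd_pos hd hh u, (boxPath_snd_le hd hh u).trans (min_le_left _ _)⟩,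
      rfl⟩, ?_⟩
  · rw [boxPath_of_le hd hA, sub_zero, hexp s hs, hα0]
  · rw [boxPath_of_ge hd (by linarith), add_sub_cancel_left, hexp t ht, hαd]
  calc lengthOn BS (boxPath α hd h A) (Icc 0 (A + d + B))
      ≤ ENNReal.ofReal (boxArclength hd h A (A + d + B) - boxArclength hd h A 0) :=
        lengthOn_le_of_le_sub _ _ ((monotone_boxArclength hd hh).monotoneOn _)
          fun u _ v _ huv => BS_boxPath_le hd hα hh huv
    _ ≤ ENNReal.ofReal (BS (p, s) (q, t) + 2 + 2 * (d / M)) := by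
        refine ENNReal.ofReal_le_ofReal ?_
        rw [boxArclength_of_ge hd (by linarith), boxArclength_of_le hd hA, BS_eq hs ht]
        have := log_le_log hh (min_le_right M (d + max s t))
        have := div_min_add_le hd hmax hM
        dsimp only
        linarith

theorem BS_le_dLen (hgeo : GeodesicSpace Y) (hM : 0 < M) {x y : Y × ℝ} (hx : inXM M x)
    (hy : inXM M y) : BS x y ≤ dLen M x y := by
  obtain ⟨L, hL, hLle⟩ := exists_mem_pathLengths_le hgeo hM hx hy
  have hfin : sInf (pathLengths M x y) ≠ ⊤ :=
    ne_top_of_le_ne_top ENNReal.ofReal_ne_top ((sInf_le hL).trans hLle)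
  rw [dLen_eq_toReal_sInf]
  exact (ENNReal.ofReal_le_iff_le_toReal hfin).1
    (le_sInf fun _ hL' => ofReal_BS_le_of_mem_pathLengths hL')

theorem dLen_le_BS_add (hgeo : GeodesicSpace Y) (hM : 0 < M) {x y : Y × ℝ} (hx : inXM M x)
    (hy : inXM M y) : dLen M x y ≤ BS x y + 2 + 2 * (dist x.1 y.1 / M) := by
  obtain ⟨L, hL, hLle⟩ := exists_mem_pathLengths_le hgeo hM hx hy
  rw [dLen_eq_toReal_sInf]
  exact ENNReal.toReal_le_of_le_ofReal
    (by linarith [BS_nonneg hx.1 hy.1, div_nonneg (dist_nonneg (x := x.1) (y := y.1)) hM.le])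
    ((sInf_le hL).trans hLle)

end LengthMetric

section GromovProduct

variable {Y : Type*} [MetricSpace Y]

noncomputable def bsGromovProd (ω x y : Y × ℝ) : ℝ := (BS x ω + BS y ω - BS x y) / 2

lemma abs_gromovProd_sub_bsGromovProd_le [CompactSpace Y] (hgeo : GeodesicSpace Y) {M : ℝ}
    (hM : 0 < M) {ω x y : Y × ℝ} (hω : inXM M ω) (hx : inXM M x) (hy : inXM M y) :
    |gromovProd M ω x y - bsGromovProd ω x y| ≤ 2 + 2 * (Metric.diam (univ : Set Y) / M) := by
  have hdiam : ∀ p q : Y, dist p q / M ≤ Metric.diam (univ : Set Y) / M := fun p q =>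
    div_le_div_of_nonneg_right
      (Metric.dist_le_diam_of_mem isCompact_univ.isBounded (mem_univ p) (mem_univ q)) hM.le
  have := BS_le_dLen hgeo hM hx hω
  have := BS_le_dLen hgeo hM hy hω
  have := BS_le_dLen hgeo hM hx hy
  have := dLen_le_BS_add hgeo hM hx hω
  have := dLen_le_BS_add hgeo hM hy hω
  have := dLen_le_BS_add hgeo hM hx hy
  have := hdiam x.1 ω.1
  have := hdiam y.1 ω.1
  have := hdiam x.1 y.1
  rw [gromovProd, bsGromovProd, abs_le]
  constructor <;> linarith

lemma bsGromovProd_eq {ω x y : Y × ℝ} (hω : 0 < ω.2) (hx : 0 < x.2) (hy : 0 < y.2) :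
    bsGromovProd ω x y = log (dist x.1 ω.1 + max x.2 ω.2) + log (dist y.1 ω.1 + max y.2 ω.2)
      - log ω.2 - log (dist x.1 y.1 + max x.2 y.2) := by
  rw [bsGromovProd, BS_eq hx hω, BS_eq hy hω, BS_eq hx hy]
  ring

lemma tendsto_log_dist_add_max {ι : Type*} {l : Filter ι} {x y : ι → Y × ℝ} {a b : Y}
    {σ τ : ℝ} (hx : Tendsto x l (𝓝 (a, σ))) (hy : Tendsto y l (𝓝 (b, τ)))
    (hpos : dist a b + max σ τ ≠ 0) :
    Tendsto (fun i => log (dist (x i).1 (y i).1 + max (x i).2 (y i).2)) l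
      (𝓝 (log (dist a b + max σ τ))) :=
  ((hx.fst_nhds.dist hy.fst_nhds).add (hx.snd_nhds.max hy.snd_nhds)).log hpos

lemma tendsto_bsGromovProd {ι : Type*} {l : Filter ι} {ω : Y × ℝ} (hω : 0 < ω.2)
    {x y : ι → Y × ℝ} (hxpos : ∀ i, 0 < (x i).2) (hypos : ∀ i, 0 < (y i).2) {a b : Y}
    (hab : a ≠ b) (hx : Tendsto x l (𝓝 (a, 0))) (hy : Tendsto y l (𝓝 (b, 0))) :
    Tendsto (fun i => bsGromovProd ω (x i) (y i)) l
      (𝓝 (log (dist a ω.1 + ω.2) + log (dist b ω.1 + ω.2) - log ω.2 - log (dist a b))) := by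
  have hxω := tendsto_log_dist_add_max hx (tendsto_const_nhds (x := ω))
    (by rw [max_eq_right hω.le]; positivity)
  have hyω := tendsto_log_dist_add_max hy (tendsto_const_nhds (x := ω))
    (by rw [max_eq_right hω.le]; positivity)
  have hxy := tendsto_log_dist_add_max hx hy
    (by rw [max_self, add_zero]; exact dist_ne_zero.2 hab)
  rw [max_eq_right hω.le] at hxω hyω
  rw [max_self, add_zero] at hxy
  simp_rw [bsGromovProd_eq hω (hxpos _) (hypos _)]
  exact ((hxω.add hyω).sub_const _).sub hxy

end GromovProduct

lemma abs_liminf_sub_le {ι : Type*} {l : Filter ι} [l.NeBot] {f g : ι → ℝ} {c K : ℝ}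
    (hg : Tendsto g l (𝓝 c)) (hfg : ∀ i, |f i - g i| ≤ K) : |liminf f l - c| ≤ K := by
  have hup : ∀ᶠ i in l, f i ≤ g i + K :=
    Eventually.of_forall fun i => by linarith [(abs_le.1 (hfg i)).2]
  have hdown : ∀ᶠ i in l, g i - K ≤ f i :=
    Eventually.of_forall fun i => by linarith [(abs_le.1 (hfg i)).1]
  have hgup := hg.add_const K
  have hgdown := hg.sub_const K
  have hle := liminf_le_liminf hup (hgdown.isBoundedUnder_ge.mono_ge hdown)
    hgup.isBoundedUnder_le.isCoboundedUnder_ge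
  have hge := liminf_le_liminf hdown hgdown.isBoundedUnder_ge
    (hgup.isBoundedUnder_le.mono_le hup).isCoboundedUnder_ge
  rw [hgup.liminf_eq] at hle
  rw [hgdown.liminf_eq] at hge
  exact abs_le.2 ⟨by linarith, by linarith⟩

lemma abs_log_add_log_sub_log_le {m E u v : ℝ} (hm : 0 < m) (hmu : m ≤ u) (huE : u ≤ E)
    (hmv : m ≤ v) (hvE : v ≤ E) : |log u + log v - log m| ≤ 2 * |log E| + |log m| := by
  have := log_le_log hm hmu
  have := log_le_log (hm.trans_le hmu) huE
  have := log_le_log hm hmv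
  have := log_le_log (hm.trans_le hmv) hvE
  rw [abs_le]
  constructor <;>
    linarith [le_abs_self (log E), abs_nonneg (log E), neg_abs_le (log m), le_abs_self (log m)]

theorem stmt8_general {Y : Type*} [MetricSpace Y] [CompactSpace Y]
    (hgeo : GeodesicSpace Y) {M : ℝ} (hM : 0 < M) (ω : Y × ℝ) (hω : inXM M ω) :
    ∃ C : ℝ, 0 < C ∧ ∀ a b : Y, a ≠ b →
      ∀ (p q : ℕ → Y) (s t : ℕ → ℝ),
        (∀ i, inXM M (p i, s i)) → (∀ i, inXM M (q i, t i)) →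
        Filter.Tendsto s Filter.atTop (nhds 0) →
        Filter.Tendsto t Filter.atTop (nhds 0) →
        Filter.Tendsto p Filter.atTop (nhds a) →
        Filter.Tendsto q Filter.atTop (nhds b) →
        |Filter.liminf (fun i => gromovProd M ω (p i, s i) (q i, t i)) Filter.atTop
            + Real.log (dist a b)| ≤ C := by
  set D := Metric.diam (univ : Set Y)
  have hdist : ∀ a : Y, dist a ω.1 + ω.2 ≤ D + ω.2 := fun a => by
    linarith [Metric.dist_le_diam_of_mem isCompact_univ.isBounded (mem_univ a) (mem_univ ω.1)]
  refine ⟨2 + 2 * (D / M) + (2 * |log (D + ω.2)| + |log ω.2|),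
    by positivity [Metric.diam_nonneg (s := (univ : Set Y))], ?_⟩
  intro a b hab p q s t hps hqt hs ht hpa hqb
  have hlim := tendsto_bsGromovProd hω.1 (fun i => (hps i).1) (fun i => (hqt i).1) hab
    (hpa.prodMk_nhds hs) (hqb.prodMk_nhds ht)
  have hclose := abs_liminf_sub_le hlim
    fun i => abs_gromovProd_sub_bsGromovProd_le hgeo hM hω (hps i) (hqt i)
  have hbound := abs_log_add_log_sub_log_le hω.1 (le_add_of_nonneg_left dist_nonneg)
    (hdist a) (le_add_of_nonneg_left dist_nonneg) (hdist b)
  calc _ = |(liminf (fun i => gromovProd M ω (p i, s i) (q i, t i)) atTop -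
        (log (dist a ω.1 + ω.2) + log (dist b ω.1 + ω.2) - log ω.2 - log (dist a b))) +
        (log (dist a ω.1 + ω.2) + log (dist b ω.1 + ω.2) - log ω.2)| := by ring_nf
    _ ≤ _ := (abs_add_le _ _).trans (add_le_add hclose hbound)

/-- there is a constant `C > 0` such that for all distinct boundary
points `a ≠ b` and all sequences converging to them, the liminf of the Gromov
products differs from `−log d_Y(a,b)` by at most `C`. -/
theorem stmt8 {Y : Type*} [MetricSpace Y] [CompactSpace Y] [Nontrivial Y]
    (hgeo : GeodesicSpace Y) {M : ℝ} (hM : 0 < M) (ω : Y × ℝ) (hω : inXM M ω) :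
    ∃ C : ℝ, 0 < C ∧ ∀ a b : Y, a ≠ b →
      ∀ (p q : ℕ → Y) (s t : ℕ → ℝ),
        (∀ i, inXM M (p i, s i)) → (∀ i, inXM M (q i, t i)) →
        Filter.Tendsto s Filter.atTop (nhds 0) →
        Filter.Tendsto t Filter.atTop (nhds 0) →
        Filter.Tendsto p Filter.atTop (nhds a) →
        Filter.Tendsto q Filter.atTop (nhds b) →
        |Filter.liminf (fun i => gromovProd M ω (p i, s i) (q i, t i)) Filter.atTop
            + Real.log (dist a b)| ≤ C :=
  stmt8_general hgeo hM ω hω
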